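/- arXiv:1910.08158 — 6 statements merged into one kernel-verified Lean document; each statement's English description precedes it below -/
import Mathlib

section
/- If f : (0,a] → ℝ is continuous and satisfies, for every x ∈ (0,a], the integral equation f(x) = ( W(x)/W(a) )^{1/(1−ℓ)} + (1/(1−ℓ)) ∫_x^a ( f(s)/Z(s) ) · ( W(x)/W(s) )^{1/(1−ℓ)} · ( W'(s)·Z(s)/W(s) − q·W(s) ) ds, then f is differentiable on (0,a) and satisfies f'(x) = (1/(1−ℓ)) · ( q·W(x)/Z(x) ) · f(x) for all x ∈ (0,a). -/
/-!
Since `(W x / W s) ^ c = W x ^ c / W s ^ c`, the integral equation says `f = W ^ c * F` on `(0, a]`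
with `F x = W a ^ (-c) + c ∫ₓᵃ g s / W s ^ c ds`, where `g = (f / Z) (W' Z / W - q W)` is continuous.
The fundamental theorem of calculus and the product rule give `f' = c (W' / W) f - c g`, and in
`c g = c (W' / W) f - c q W f / Z` the `W'` terms cancel.
-/

open MeasureTheory Set Filter Topology

/-- `Z(x) = 1 + q ∫₀ˣ W(z) dz`. -/
noncomputable def Zfun (q : ℝ) (W : ℝ → ℝ) (x : ℝ) : ℝ :=
  1 + q * ∫ z in (0:ℝ)..x, W z

lemma intervalIntegrable_zero_of_monotoneOn_Ioi {W : ℝ → ℝ} {y : ℝ} (hy : 0 < y)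
    (hW : ∀ x > 0, 0 ≤ W x) (hmono : MonotoneOn W (Ioi 0)) (hcont : ContinuousOn W (Ioi 0)) :
    IntervalIntegrable W volume 0 y := by
  rw [intervalIntegrable_iff_integrableOn_Ioc_of_le hy.le]
  refine .of_bound measure_Ioc_lt_top
    ((hcont.mono Ioc_subset_Ioi_self).aestronglyMeasurable measurableSet_Ioc) (W y)
    (ae_restrict_of_forall_mem measurableSet_Ioc fun s hs => ?_)
  rw [Real.norm_of_nonneg (hW s hs.1)]
  exact hmono hs.1 hy hs.2

lemma hasDerivAt_Zfun (q : ℝ) {W : ℝ → ℝ} {x : ℝ} (hint : IntervalIntegrable W volume 0 x)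
    (hmeas : StronglyMeasurableAtFilter W (𝓝 x)) (hcont : ContinuousAt W x) :
    HasDerivAt (Zfun q W) (q * W x) x :=
  ((intervalIntegral.integral_hasDerivAt_right hint hmeas hcont).const_mul q).const_add 1

lemma continuousOn_Zfun (q : ℝ) {W : ℝ → ℝ} (hW : ∀ x > 0, 0 ≤ W x)
    (hmono : MonotoneOn W (Ioi 0)) (hcont : ContinuousOn W (Ioi 0)) :
    ContinuousOn (Zfun q W) (Ioi 0) := fun y hy =>
  (hasDerivAt_Zfun q (intervalIntegrable_zero_of_monotoneOn_Ioi hy hW hmono hcont)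
    (hcont.stronglyMeasurableAtFilter isOpen_Ioi y hy)
    (hcont.continuousAt (isOpen_Ioi.mem_nhds hy))).continuousAt.continuousWithinAt

lemma one_le_Zfun {q : ℝ} (hq : 0 ≤ q) {W : ℝ → ℝ} {x : ℝ} (hx : 0 ≤ x)
    (hW : ∀ s ∈ Ioc 0 x, 0 ≤ W s) : 1 ≤ Zfun q W x := by
  have hint : 0 ≤ ∫ z in (0:ℝ)..x, W z := by
    rw [intervalIntegral.integral_of_le hx]
    exact setIntegral_nonneg measurableSet_Ioc hW
  exact le_add_of_nonneg_right (mul_nonneg hq hint)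

lemma integral_mul_div_rpow {W g : ℝ → ℝ} {c y a : ℝ} (hya : y ≤ a)
    (hW : ∀ s ∈ Icc y a, 0 < W s) :
    ∫ s in y..a, g s * (W y / W s) ^ c = W y ^ c * ∫ s in y..a, g s / W s ^ c := by
  rw [← intervalIntegral.integral_const_mul]
  refine intervalIntegral.integral_congr fun s hs => ?_
  rw [uIcc_of_le hya] at hs
  simp only [Real.div_rpow (hW y ⟨le_rfl, hya⟩).le (hW s hs).le]
  ring

theorem hasDerivAt_of_eq_rpow_integral {W W' f g : ℝ → ℝ} {c a x : ℝ} (hx : x ∈ Ioo 0 a)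
    (hWpos : ∀ y ∈ Ioc 0 a, 0 < W y) (hWc : ContinuousOn W (Ioc 0 a))
    (hW' : HasDerivAt W (W' x) x) (hg : ContinuousOn g (Ioc 0 a))
    (heq : ∀ y ∈ Ioc 0 a, f y = (W y / W a) ^ c + c * ∫ s in y..a, g s * (W y / W s) ^ c) :
    HasDerivAt f (c * (W' x / W x * f x - g x)) x := by
  obtain ⟨hx0, hxa⟩ := hx
  have hWa := hWpos a ⟨hx0.trans hxa, le_rfl⟩
  have hWx := hWpos x ⟨hx0, hxa.le⟩
  set k : ℝ → ℝ := fun s => g s / W s ^ c with hk_def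
  set F : ℝ → ℝ := fun y => (W a ^ c)⁻¹ + c * ∫ s in y..a, k s
  have hf_eq : ∀ y ∈ Ioc 0 a, f y = W y ^ c * F y := by
    intro y hy
    rw [heq y hy, integral_mul_div_rpow hy.2 fun s hs => hWpos s ⟨hy.1.trans_le hs.1, hs.2⟩,
      Real.div_rpow (hWpos y hy).le hWa.le]
    ring
  have hk : ContinuousOn k (Ioc 0 a) :=
    hg.div (hWc.rpow_const fun s hs => Or.inl (hWpos s hs).ne') fun s hs =>
      (Real.rpow_pos_of_pos (hWpos s hs) c).ne'
  have hF : HasDerivAt F (c * -k x) x := by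
    refine ((intervalIntegral.integral_hasDerivAt_left ?_ ?_ ?_).const_mul c).const_add _
    · refine (hk.mono ?_).intervalIntegrable
      rw [uIcc_of_le hxa.le]
      exact fun s hs => ⟨hx0.trans_le hs.1, hs.2⟩
    · exact (hk.mono Ioo_subset_Ioc_self).stronglyMeasurableAtFilter isOpen_Ioo x ⟨hx0, hxa⟩
    · exact hk.continuousAt (mem_of_superset (Ioo_mem_nhds hx0 hxa) Ioo_subset_Ioc_self)
  have hlocal : f =ᶠ[𝓝 x] fun y => W y ^ c * F y :=
    eventuallyEq_of_mem (Ioo_mem_nhds hx0 hxa) fun y hy => hf_eq y (Ioo_subset_Ioc_self hy)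
  refine (((hW'.rpow_const (Or.inl hWx.ne')).mul hF).congr_of_eventuallyEq hlocal).congr_deriv ?_
  rw [hf_eq x ⟨hx0, hxa.le⟩, Real.rpow_sub_one hWx.ne', hk_def]
  field_simp
  ring

theorem stmt5_general (q ℓ a : ℝ) (hq : 0 < q)
    (W W' : ℝ → ℝ) (hWpos : ∀ x > (0:ℝ), 0 < W x)
    (hW' : ∀ x > (0:ℝ), HasDerivAt W (W' x) x)
    (hW'c : ContinuousOn W' (Set.Ioi 0))
    (hmono : StrictMonoOn W (Set.Ioi 0))
    (f : ℝ → ℝ) (hfc : ContinuousOn f (Set.Ioc 0 a))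
    (heq : ∀ x ∈ Set.Ioc (0:ℝ) a,
      f x = (W x / W a) ^ ((1:ℝ) / (1 - ℓ))
        + (1 / (1 - ℓ)) *
            ∫ s in x..a,
              (f s / Zfun q W s) * (W x / W s) ^ ((1:ℝ) / (1 - ℓ)) *
                (W' s * Zfun q W s / W s - q * W s)) :
    ∀ x ∈ Set.Ioo (0:ℝ) a,
      HasDerivAt f ((1 / (1 - ℓ)) * (q * W x / Zfun q W x) * f x) x := by
  intro x hx
  have hWcont : ContinuousOn W (Ioi 0) := fun y hy => (hW' y hy).continuousAt.continuousWithinAt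
  have hZpos : ∀ y > 0, 0 < Zfun q W y := fun y hy =>
    one_pos.trans_le (one_le_Zfun hq.le hy.le fun s hs => (hWpos s hs.1).le)
  have hZcont := continuousOn_Zfun q (fun y hy => (hWpos y hy).le) hmono.monotoneOn hWcont
  set g : ℝ → ℝ := fun s => f s / Zfun q W s * (W' s * Zfun q W s / W s - q * W s) with hg_def
  have hsub : Ioc 0 a ⊆ Ioi 0 := Ioc_subset_Ioi_self
  have hg : ContinuousOn g (Ioc 0 a) := by
    have hZ := hZcont.mono hsub
    have hW := hWcont.mono hsub
    exact (hfc.div hZ fun s hs => (hZpos s hs.1).ne').mul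
      ((((hW'c.mono hsub).mul hZ).div hW fun s hs => (hWpos s hs.1).ne').sub
        (continuousOn_const.mul hW))
  have key := hasDerivAt_of_eq_rpow_integral (f := f) (c := 1 / (1 - ℓ)) hx
    (fun y hy => hWpos y hy.1) (hWcont.mono hsub) (hW' x hx.1) hg fun y hy => by
      rw [heq y hy]
      congr 2
      exact intervalIntegral.integral_congr fun s _ => by ring
  refine key.congr_deriv ?_
  have := hZpos x hx.1
  have := hWpos x hx.1
  rw [hg_def]
  field_simp
  ring

theorem stmt5 (q ℓ a : ℝ) (hq : 0 < q) (hℓ : ℓ ∈ Set.Ioo (0:ℝ) 1) (ha : 0 < a)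
    (W W' : ℝ → ℝ) (hWpos : ∀ x > (0:ℝ), 0 < W x)
    (hW' : ∀ x > (0:ℝ), HasDerivAt W (W' x) x)
    (hW'c : ContinuousOn W' (Set.Ioi 0))
    (hmono : StrictMonoOn W (Set.Ioi 0))
    (f : ℝ → ℝ) (hfc : ContinuousOn f (Set.Ioc 0 a))
    (heq : ∀ x ∈ Set.Ioc (0:ℝ) a,
      f x = (W x / W a) ^ ((1:ℝ) / (1 - ℓ))
        + (1 / (1 - ℓ)) *
            ∫ s in x..a,
              (f s / Zfun q W s) * (W x / W s) ^ ((1:ℝ) / (1 - ℓ)) *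
                (W' s * Zfun q W s / W s - q * W s)) :
    ∀ x ∈ Set.Ioo (0:ℝ) a,
      HasDerivAt f ((1 / (1 - ℓ)) * (q * W x / Zfun q W x) * f x) x :=
  stmt5_general q ℓ a hq W W' hWpos hW' hW'c hmono f hfc heq
end

section
/- lim_{b→∞} ∫_b^∞ ( W(b)/W(z) )^{1/(1−ℓ)} dz = (1−ℓ)/Φ. -/
/-!
Once `W' / W` stays within `ε` of `Φ` on `[b, ∞)`, the mean value theorem applied to `log W`
squeezes `(W b / W z) ^ p` between `exp (-p (Φ + ε) (z - b))` and `exp (-p (Φ - ε) (z - b))`.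
Integrating over `z > b` traps the integral between `1 / (p (Φ + ε))` and `1 / (p (Φ - ε))`;
letting `ε → 0` gives the limit `1 / (p Φ)`, which is `(1 - ℓ) / Φ` for `p = 1 / (1 - ℓ)`.
-/

open MeasureTheory Set Filter

open Topology Real

theorem tendsto_of_forall_eventually_mem_Icc {α ι β : Type*} [LinearOrder β] [TopologicalSpace β]
    [OrderTopology β] {l : Filter α} {l' : Filter ι} [l'.NeBot] {f : α → β} {lo hi : ι → β}
    {L : β} (hlo : Tendsto lo l' (𝓝 L)) (hhi : Tendsto hi l' (𝓝 L))
    (h : ∀ᶠ i in l', ∀ᶠ x in l, f x ∈ Icc (lo i) (hi i)) : Tendsto f l (𝓝 L) := by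
  refine tendsto_order.2 ⟨fun a ha => ?_, fun a ha => ?_⟩
  · obtain ⟨i, hai, hi⟩ := ((hlo.eventually (lt_mem_nhds ha)).and h).exists
    filter_upwards [hi] with x hx using hai.trans_le hx.1
  · obtain ⟨i, hai, hi⟩ := ((hhi.eventually (gt_mem_nhds ha)).and h).exists
    filter_upwards [hi] with x hx using hx.2.trans_lt hai

theorem exp_neg_mul_sub (c b z : ℝ) : exp (-(c * (z - b))) = exp (c * b) * exp (-c * z) := by
  rw [← exp_add]; ring_nf

theorem integrableOn_exp_neg_mul_sub_Ioi {c : ℝ} (hc : 0 < c) (b : ℝ) :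
    IntegrableOn (fun z => exp (-(c * (z - b)))) (Ioi b) := by
  simp_rw [exp_neg_mul_sub c b]
  exact (integrableOn_exp_mul_Ioi (neg_lt_zero.2 hc) b).const_mul _

theorem integral_exp_neg_mul_sub_Ioi {c : ℝ} (hc : 0 < c) (b : ℝ) :
    ∫ z in Ioi b, exp (-(c * (z - b))) = 1 / c := by
  simp_rw [exp_neg_mul_sub c b]
  rw [integral_const_mul, integral_exp_mul_Ioi (neg_lt_zero.2 hc), neg_mul, exp_neg]
  field_simp

section LogDerivative

variable {W W' : ℝ → ℝ} {Φ ε b : ℝ}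

theorem abs_log_sub_log_sub_mul_le (hpos : ∀ x ∈ Ici b, 0 < W x)
    (hderiv : ∀ x ∈ Ici b, HasDerivAt W (W' x) x) (hclose : ∀ x ∈ Ici b, |W' x / W x - Φ| ≤ ε)
    {z : ℝ} (hz : b ≤ z) : |log (W z) - log (W b) - Φ * (z - b)| ≤ ε * (z - b) := by
  have hmvt := Convex.norm_image_sub_le_of_norm_hasDerivWithin_le
    (f := fun x => log (W x) - Φ * x) (f' := fun x => W' x / W x - Φ)
    (fun x hx => (((hderiv x hx).log (hpos x hx).ne').sub
      ((hasDerivAt_id x).const_mul Φ)).hasDerivWithinAt.congr_deriv (by simp))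
    hclose (convex_Ici b) self_mem_Ici hz
  simp only [Real.norm_eq_abs, abs_of_nonneg (sub_nonneg.2 hz)] at hmvt
  convert hmvt using 2
  ring

theorem exp_le_div_rpow_le {p : ℝ} (hp : 0 ≤ p) (hpos : ∀ x ∈ Ici b, 0 < W x)
    (hderiv : ∀ x ∈ Ici b, HasDerivAt W (W' x) x) (hclose : ∀ x ∈ Ici b, |W' x / W x - Φ| ≤ ε)
    {z : ℝ} (hz : b ≤ z) :
    exp (-(p * (Φ + ε) * (z - b))) ≤ (W b / W z) ^ p ∧
      (W b / W z) ^ p ≤ exp (-(p * (Φ - ε) * (z - b))) := by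
  have hWb := hpos b self_mem_Ici
  have hWz := hpos z hz
  obtain ⟨hlow, hupp⟩ := abs_le.1 (abs_log_sub_log_sub_mul_le hpos hderiv hclose hz)
  rw [rpow_def_of_pos (div_pos hWb hWz), log_div hWb.ne' hWz.ne']
  constructor <;> apply exp_le_exp.2 <;> nlinarith

theorem integral_div_rpow_mem_Icc {p : ℝ} (hp : 0 < p) (hεΦ : ε < Φ)
    (hpos : ∀ x ∈ Ici b, 0 < W x)
    (hderiv : ∀ x ∈ Ici b, HasDerivAt W (W' x) x) (hclose : ∀ x ∈ Ici b, |W' x / W x - Φ| ≤ ε) :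
    ∫ z in Ioi b, (W b / W z) ^ p ∈ Icc (1 / (p * (Φ + ε))) (1 / (p * (Φ - ε))) := by
  have hε : 0 ≤ ε := (abs_nonneg _).trans (hclose b self_mem_Ici)
  have hfast : 0 < p * (Φ + ε) := mul_pos hp (by linarith)
  have hslow : 0 < p * (Φ - ε) := mul_pos hp (sub_pos.2 hεΦ)
  have hbounds (z : ℝ) (hz : z ∈ Ioi b) := exp_le_div_rpow_le hp.le hpos hderiv hclose hz.le
  have hW : ContinuousOn W (Ioi b) := fun x hx =>
    (hderiv x (Ioi_subset_Ici_self hx)).continuousAt.continuousWithinAt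
  have hcont : ContinuousOn (fun z => (W b / W z) ^ p) (Ioi b) :=
    (continuousOn_const.div hW fun x hx => (hpos x (Ioi_subset_Ici_self hx)).ne').rpow_const
      fun _ _ => Or.inr hp.le
  have hint : IntegrableOn (fun z => (W b / W z) ^ p) (Ioi b) := by
    refine (integrableOn_exp_neg_mul_sub_Ioi hslow b).mono'
      (hcont.aestronglyMeasurable measurableSet_Ioi)
      ((ae_restrict_iff' measurableSet_Ioi).2 (ae_of_all _ fun z hz => ?_))
    rw [norm_of_nonneg (rpow_nonneg (div_pos (hpos b self_mem_Ici)
      (hpos z (Ioi_subset_Ici_self hz))).le _)]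
    exact (hbounds z hz).2
  constructor
  · rw [← integral_exp_neg_mul_sub_Ioi hfast b]
    exact setIntegral_mono_on (integrableOn_exp_neg_mul_sub_Ioi hfast b) hint measurableSet_Ioi
      fun z hz => (hbounds z hz).1
  · rw [← integral_exp_neg_mul_sub_Ioi hslow b]
    exact setIntegral_mono_on hint (integrableOn_exp_neg_mul_sub_Ioi hslow b) measurableSet_Ioi
      fun z hz => (hbounds z hz).2

end LogDerivative

theorem tendsto_integral_Ioi_div_rpow {W W' : ℝ → ℝ} {Φ p : ℝ} (hΦ : 0 < Φ) (hp : 0 < p)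
    (hpos : ∀ᶠ x in atTop, 0 < W x) (hderiv : ∀ᶠ x in atTop, HasDerivAt W (W' x) x)
    (hratio : Tendsto (fun x => W' x / W x) atTop (𝓝 Φ)) :
    Tendsto (fun b => ∫ z in Ioi b, (W b / W z) ^ p) atTop (𝓝 (1 / (p * Φ))) := by
  have hlower : Tendsto (fun ε => 1 / (p * (Φ + ε))) (𝓝[>] 0) (𝓝 (1 / (p * Φ))) := by
    have : ContinuousAt (fun ε => 1 / (p * (Φ + ε))) 0 :=
      continuousAt_const.div (by fun_prop) (by simp [hp.ne', hΦ.ne'])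
    simpa only [add_zero] using tendsto_nhdsWithin_of_tendsto_nhds this.tendsto
  have hupper : Tendsto (fun ε => 1 / (p * (Φ - ε))) (𝓝[>] 0) (𝓝 (1 / (p * Φ))) := by
    have : ContinuousAt (fun ε => 1 / (p * (Φ - ε))) 0 :=
      continuousAt_const.div (by fun_prop) (by simp [hp.ne', hΦ.ne'])
    simpa only [sub_zero] using tendsto_nhdsWithin_of_tendsto_nhds this.tendsto
  refine tendsto_of_forall_eventually_mem_Icc hlower hupper ?_
  filter_upwards [Ioo_mem_nhdsGT hΦ] with ε hε
  have hclose : ∀ᶠ x in atTop, |W' x / W x - Φ| ≤ ε :=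
    hratio.eventually (Metric.closedBall_mem_nhds Φ hε.1)
  filter_upwards [eventually_forall_ge_atTop.2 (hpos.and (hderiv.and hclose))] with b hb
  exact integral_div_rpow_mem_Icc hp hε.2 (fun x hx => (hb x hx).1) (fun x hx => (hb x hx).2.1)
    fun x hx => (hb x hx).2.2

theorem stmt6_general (ℓ Φ : ℝ) (hℓ : ℓ ∈ Set.Ioo (0:ℝ) 1) (hΦ : 0 < Φ)
    (W W' : ℝ → ℝ) (hWpos : ∀ x > (0:ℝ), 0 < W x)
    (hW' : ∀ x > (0:ℝ), HasDerivAt W (W' x) x)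
    (hratio : Tendsto (fun x => W' x / W x) atTop (nhds Φ)) :
    Tendsto (fun b => ∫ z in Set.Ioi b, (W b / W z) ^ ((1:ℝ) / (1 - ℓ)))
      atTop (nhds ((1 - ℓ) / Φ)) := by
  have h1ℓ : 0 < 1 - ℓ := sub_pos.2 hℓ.2
  have hlimit : 1 / (1 / (1 - ℓ) * Φ) = (1 - ℓ) / Φ := by field_simp
  rw [← hlimit]
  exact tendsto_integral_Ioi_div_rpow hΦ (by positivity)
    ((eventually_gt_atTop 0).mono hWpos) ((eventually_gt_atTop 0).mono hW') hratio

theorem stmt6 (ℓ Φ : ℝ) (hℓ : ℓ ∈ Set.Ioo (0:ℝ) 1) (hΦ : 0 < Φ)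
    (W W' : ℝ → ℝ) (hWpos : ∀ x > (0:ℝ), 0 < W x)
    (hW' : ∀ x > (0:ℝ), HasDerivAt W (W' x) x)
    (hW'c : ContinuousOn W' (Set.Ioi 0))
    (hmono : StrictMonoOn W (Set.Ioi 0))
    (hratio : Tendsto (fun x => W' x / W x) atTop (nhds Φ)) :
    Tendsto (fun b => ∫ z in Set.Ioi b, (W b / W z) ^ ((1:ℝ) / (1 - ℓ)))
      atTop (nhds ((1 - ℓ) / Φ)) :=
  stmt6_general ℓ Φ hℓ hΦ W W' hWpos hW' hratio
end

section
/- lim_{b→∞} ∫_b^∞ ( W(b)/W(z) )^{1/(1−ℓ)} · ( W'(z)·Z(z)/W(z) − q·W(z) ) dz = 0. -/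
/-!
Write `p = 1/(1-ℓ) > 0`. Once `W, W' > 0`, the integrand factors as
`W(b)^p · W'(z) W(z)^(-p-1) · (Z(z) - q W(z)²/W'(z))`. The middle factor is the derivative of
`-W^(-p)/p`, which is increasing and bounded by `0`, so its integral over `(b, ∞)` is at most
`W(b)^(-p)/p`. Hence the integral is bounded by `sup_{z > b} |Z(z) - q W(z)²/W'(z)| / p`, which
tends to `0` by the last hypothesis.
-/

open MeasureTheory Set Filter

open Topology

lemma MonotoneOn.exists_tendsto_atTop_of_le {α β : Type*} [LinearOrder α]
    [ConditionallyCompleteLinearOrder β] [TopologicalSpace β] [OrderTopology β]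
    {f : α → β} {a : α} {M : β} (hf : MonotoneOn f (Ici a)) (hM : ∀ x ≥ a, f x ≤ M) :
    ∃ L ≤ M, Tendsto f atTop (𝓝 L) := by
  have : Nonempty α := ⟨a⟩
  have hmono : Monotone fun x => f (max x a) := fun x y hxy =>
    hf (le_max_right x a) (le_max_right y a) (max_le_max_right a hxy)
  refine ⟨⨆ x, f (max x a), ciSup_le fun x => hM _ (le_max_right x a), ?_⟩
  refine (tendsto_atTop_ciSup hmono ⟨M, ?_⟩).congr' ?_
  · rintro _ ⟨x, rfl⟩
    exact hM _ (le_max_right x a)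
  · filter_upwards [eventually_ge_atTop a] with x hx
    rw [max_eq_left hx]

theorem integral_Ioi_le_of_hasDerivAt_of_nonneg {F g : ℝ → ℝ} {a M : ℝ}
    (hderiv : ∀ x ∈ Ici a, HasDerivAt F (g x) x) (hg : ∀ x ∈ Ioi a, 0 ≤ g x)
    (hM : ∀ x ≥ a, F x ≤ M) : IntegrableOn g (Ioi a) ∧ ∫ x in Ioi a, g x ≤ M - F a := by
  have hmono : MonotoneOn F (Ici a) := by
    refine monotoneOn_of_hasDerivWithinAt_nonneg (f' := g) (convex_Ici a)
      (fun x hx => (hderiv x hx).continuousAt.continuousWithinAt) ?_ ?_ <;>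
    rw [interior_Ici]
    · exact fun x hx => (hderiv x (Ioi_subset_Ici_self hx)).hasDerivWithinAt
    · exact hg
  obtain ⟨L, hLM, hL⟩ := hmono.exists_tendsto_atTop_of_le hM
  refine ⟨integrableOn_Ioi_deriv_of_nonneg' hderiv hg hL, ?_⟩
  rw [integral_Ioi_of_hasDerivAt_of_nonneg' hderiv hg hL]
  linarith

lemma HasDerivAt.neg_rpow_neg_div {W : ℝ → ℝ} {w x p : ℝ} (hW : HasDerivAt W w x)
    (hx : 0 < W x) (hp : p ≠ 0) :
    HasDerivAt (fun y => -W y ^ (-p) / p) (w * W x ^ (-p - 1)) x := by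
  refine (((hW.rpow_const (p := -p) (Or.inl hx.ne')).neg).div_const p).congr_deriv ?_
  field_simp

theorem integral_Ioi_deriv_mul_rpow_le {W W' : ℝ → ℝ} {p b : ℝ} (hp : 0 < p)
    (hW : ∀ x ≥ b, 0 < W x) (hW' : ∀ x ≥ b, HasDerivAt W (W' x) x)
    (hW'_nonneg : ∀ x ≥ b, 0 ≤ W' x) :
    IntegrableOn (fun x => W' x * W x ^ (-p - 1)) (Ioi b) ∧
      ∫ x in Ioi b, W' x * W x ^ (-p - 1) ≤ W b ^ (-p) / p := by
  have h := integral_Ioi_le_of_hasDerivAt_of_nonneg (M := 0)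
    (fun x hx => (hW' x hx).neg_rpow_neg_div (hW x hx) hp.ne')
    (fun x hx => mul_nonneg (hW'_nonneg x (le_of_lt hx))
      (Real.rpow_nonneg (hW x (le_of_lt hx)).le _))
    (fun x hx => div_nonpos_of_nonpos_of_nonneg
      (neg_nonpos.2 (Real.rpow_nonneg (hW x hx).le _)) hp.le)
  simpa [neg_div] using h

theorem tendsto_integral_Ioi_rpow_mul_deriv_mul_rpow {W W' h : ℝ → ℝ} {p : ℝ} (hp : 0 < p)
    (hW : ∀ᶠ x in atTop, 0 < W x) (hW' : ∀ᶠ x in atTop, HasDerivAt W (W' x) x)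
    (hW'_nonneg : ∀ᶠ x in atTop, 0 ≤ W' x) (hh : Tendsto h atTop (𝓝 0)) :
    Tendsto (fun b => ∫ z in Ioi b, W b ^ p * (W' z * W z ^ (-p - 1)) * h z) atTop (𝓝 0) := by
  rw [Metric.tendsto_nhds]
  intro ε hε
  set δ := ε * p / 2 with hδ_def
  have hδ : 0 < δ := by positivity
  filter_upwards [eventually_forall_ge_atTop.2
    (hW.and (hW'.and (hW'_nonneg.and (Metric.tendsto_nhds.1 hh δ hδ))))] with b hb
  obtain ⟨hint, hle⟩ := integral_Ioi_deriv_mul_rpow_le hp (fun x hx => (hb x hx).1)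
    (fun x hx => (hb x hx).2.1) (fun x hx => (hb x hx).2.2.1)
  have hWb := (hb b le_rfl).1
  have hpoint : ∀ z ∈ Ioi b,
      ‖W b ^ p * (W' z * W z ^ (-p - 1)) * h z‖ ≤ W b ^ p * δ * (W' z * W z ^ (-p - 1)) := by
    intro z hz
    obtain ⟨hWz, -, hW'z, hhz⟩ := hb z (le_of_lt hz)
    rw [dist_zero_right] at hhz
    rw [norm_mul, Real.norm_of_nonneg (by positivity), mul_right_comm]
    gcongr
  rw [dist_zero_right]
  calc ‖∫ z in Ioi b, W b ^ p * (W' z * W z ^ (-p - 1)) * h z‖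
      ≤ ∫ z in Ioi b, W b ^ p * δ * (W' z * W z ^ (-p - 1)) :=
        norm_integral_le_of_norm_le (hint.const_mul _)
          (ae_restrict_of_forall_mem measurableSet_Ioi hpoint)
    _ = W b ^ p * δ * ∫ z in Ioi b, W' z * W z ^ (-p - 1) := integral_const_mul _ _
    _ ≤ W b ^ p * δ * (W b ^ (-p) / p) := by gcongr
    _ = ε / 2 := by
      rw [Real.rpow_neg hWb.le, hδ_def]
      field_simp
    _ < ε := half_lt_self hε

lemma div_rpow_mul_sub_eq {w₀ w w' Z q p : ℝ} (hw₀ : 0 ≤ w₀) (hw : 0 < w) (hw' : w' ≠ 0) :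
    (w₀ / w) ^ p * (w' * Z / w - q * w) =
      w₀ ^ p * (w' * w ^ (-p - 1)) * (Z - q * w ^ 2 / w') := by
  rw [Real.div_rpow hw₀ hw.le, Real.rpow_sub hw, Real.rpow_neg hw.le, Real.rpow_one]
  have := (Real.rpow_pos_of_pos hw p).ne'
  field_simp

theorem stmt7_general (q ℓ Φ : ℝ) (hℓ : ℓ ∈ Set.Ioo (0:ℝ) 1) (hΦ : 0 < Φ)
    (W W' : ℝ → ℝ) (hWpos : ∀ x > (0:ℝ), 0 < W x)
    (hW' : ∀ x > (0:ℝ), HasDerivAt W (W' x) x)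
    (hratio : Tendsto (fun x => W' x / W x) atTop (nhds Φ))
    (hZlim : Tendsto (fun a => Zfun q W a - q * (W a) ^ 2 / W' a) atTop (nhds 0)) :
    Tendsto
      (fun b => ∫ z in Set.Ioi b,
        (W b / W z) ^ ((1:ℝ) / (1 - ℓ)) * (W' z * Zfun q W z / W z - q * W z))
      atTop (nhds 0) := by
  have hp : 0 < (1:ℝ) / (1 - ℓ) := one_div_pos.2 (sub_pos.2 hℓ.2)
  have hW : ∀ᶠ x in atTop, 0 < W x := (eventually_gt_atTop 0).mono hWpos
  have hW'pos : ∀ᶠ x in atTop, 0 < W' x := by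
    filter_upwards [hW, hratio.eventually (eventually_gt_nhds hΦ)] with x hWx hx
    exact (div_pos_iff_of_pos_right hWx).1 hx
  refine (tendsto_integral_Ioi_rpow_mul_deriv_mul_rpow hp hW
    ((eventually_gt_atTop 0).mono hW') (hW'pos.mono fun _ => le_of_lt) hZlim).congr' ?_
  filter_upwards [eventually_forall_ge_atTop.2 (hW.and hW'pos)] with b hb
  refine setIntegral_congr_fun measurableSet_Ioi fun z hz => ?_
  obtain ⟨hWz, hW'z⟩ := hb z (le_of_lt hz)
  exact (div_rpow_mul_sub_eq (hb b le_rfl).1.le hWz hW'z.ne').symm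

theorem stmt7 (q ℓ Φ : ℝ) (hq : 0 < q) (hℓ : ℓ ∈ Set.Ioo (0:ℝ) 1) (hΦ : 0 < Φ)
    (W W' : ℝ → ℝ) (hWpos : ∀ x > (0:ℝ), 0 < W x)
    (hW' : ∀ x > (0:ℝ), HasDerivAt W (W' x) x)
    (hW'c : ContinuousOn W' (Set.Ioi 0))
    (hmono : StrictMonoOn W (Set.Ioi 0))
    (hratio : Tendsto (fun x => W' x / W x) atTop (nhds Φ))
    (hZlim : Tendsto (fun a => Zfun q W a - q * (W a) ^ 2 / W' a) atTop (nhds 0)) :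
    Tendsto
      (fun b => ∫ z in Set.Ioi b,
        (W b / W z) ^ ((1:ℝ) / (1 - ℓ)) * (W' z * Zfun q W z / W z - q * W z))
      atTop (nhds 0) :=
  stmt7_general q ℓ Φ hℓ hΦ W W' hWpos hW' hratio hZlim
end

section
/- The function f is differentiable on (0,∞) with f'(b) = (1 − S·q·W(b)) · ( W'(b)·W'''(b) − (W''(b))² ) / (W'(b))² for all b > 0; in particular, f'(b) > 0 at every b > 0 with 1 − S·q·W(b) > 0. -/
/-- `f(b) = ((1 − S·q·W(b))/W'(b))·W''(b) + S·q·W'(b)`. -/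
noncomputable def ffun (q S : ℝ) (W W' W'' : ℝ → ℝ) (b : ℝ) : ℝ :=
  ((1 - S * q * W b) / W' b) * W'' b + S * q * W' b

/-! Writing `f = (1 - S q W) · (W''/W') + S q W'`, the derivative of the first factor,
`-S q W'`, times `W''/W'` cancels the derivative `S q W''` of the last term, so only
`(1 - S q W) · (W''/W')'` survives. -/

lemma ffun_eq_mul_div (q S : ℝ) (W W' W'' : ℝ → ℝ) :
    ffun q S W W' W'' = fun b => (1 - S * q * W b) * (W'' b / W' b) + S * q * W' b := by
  funext b
  rw [ffun, div_mul_eq_mul_div, mul_div_assoc]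

lemma hasDerivAt_ffun {q S b : ℝ} {W W' W'' : ℝ → ℝ} {W''' : ℝ}
    (hW1 : HasDerivAt W (W' b) b) (hW2 : HasDerivAt W' (W'' b) b)
    (hW3 : HasDerivAt W'' W''' b) (hW' : W' b ≠ 0) :
    HasDerivAt (ffun q S W W' W'')
      ((1 - S * q * W b) * (W' b * W''' - W'' b ^ 2) / W' b ^ 2) b := by
  have hfactor : HasDerivAt (fun x => 1 - S * q * W x) (-(S * q * W' b)) b := by
    simpa using (hW1.const_mul (S * q)).const_sub 1
  have hratio : HasDerivAt (fun x => W'' x / W' x)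
      ((W''' * W' b - W'' b * W'' b) / W' b ^ 2) b :=
    hW3.div hW2 hW'
  rw [ffun_eq_mul_div]
  refine ((hfactor.mul hratio).add (hW2.const_mul (S * q))).congr_deriv ?_
  field_simp
  ring

theorem stmt11_general (q S : ℝ)
    (W W' W'' W''' : ℝ → ℝ)
    (hW1 : ∀ x > (0:ℝ), HasDerivAt W (W' x) x)
    (hW2 : ∀ x > (0:ℝ), HasDerivAt W' (W'' x) x)
    (hW3 : ∀ x > (0:ℝ), HasDerivAt W'' (W''' x) x)
    (hW'pos : ∀ x > (0:ℝ), 0 < W' x)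
    (hcm : ∀ x > (0:ℝ), (W'' x) ^ 2 < W' x * W''' x) :
    (∀ b > (0:ℝ),
      HasDerivAt (ffun q S W W' W'')
        ((1 - S * q * W b) * (W' b * W''' b - (W'' b) ^ 2) / (W' b) ^ 2) b)
    ∧ (∀ b > (0:ℝ), 0 < 1 - S * q * W b →
        0 < (1 - S * q * W b) * (W' b * W''' b - (W'' b) ^ 2) / (W' b) ^ 2) := by
  refine ⟨fun b hb => hasDerivAt_ffun (hW1 b hb) (hW2 b hb) (hW3 b hb) (hW'pos b hb).ne',
    fun b hb hfactor => ?_⟩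
  have hlogconvex : 0 < W' b * W''' b - W'' b ^ 2 := sub_pos.mpr (hcm b hb)
  have hW' : 0 < W' b ^ 2 := pow_pos (hW'pos b hb) 2
  positivity

theorem stmt11 (q S : ℝ) (hq : 0 < q)
    (W W' W'' W''' : ℝ → ℝ)
    (hW1 : ∀ x > (0:ℝ), HasDerivAt W (W' x) x)
    (hW2 : ∀ x > (0:ℝ), HasDerivAt W' (W'' x) x)
    (hW3 : ∀ x > (0:ℝ), HasDerivAt W'' (W''' x) x)
    (hW3c : ContinuousOn W''' (Set.Ioi 0))
    (hWpos : ∀ x > (0:ℝ), 0 < W x) (hW'pos : ∀ x > (0:ℝ), 0 < W' x)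
    (hcm : ∀ x > (0:ℝ), (W'' x) ^ 2 < W' x * W''' x) :
    (∀ b > (0:ℝ),
      HasDerivAt (ffun q S W W' W'')
        ((1 - S * q * W b) * (W' b * W''' b - (W'' b) ^ 2) / (W' b) ^ 2) b)
    ∧ (∀ b > (0:ℝ), 0 < 1 - S * q * W b →
        0 < (1 - S * q * W b) * (W' b * W''' b - (W'' b) ^ 2) / (W' b) ^ 2) :=
  stmt11_general q S W W' W'' W''' hW1 hW2 hW3 hW'pos hcm
end

section
/- Let b₀ > 0 be a point at which W''(b₀) = − S·q·(W'(b₀))² / (1 − S·q·W(b₀)) (note 1 − S·q·W(b₀) > 0 since S ≤ 0). Then ( W(b₀)·W'''(b₀) / (W'(b₀))² ) · (1 − S·q·W(b₀)) − S²·q²·W(b₀)·W'(b₀) / (1 − S·q·W(b₀)) > 0. -/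
/-!
At a degenerate critical point the relation `W'' = -S q W'² / (1 - S q W)` makes the expression
collapse to `W (1 - S q W) (W' W''' - W''²) / W'³`, which is positive by the log-concavity
condition `W''² < W' W'''`.
-/

lemma degenerate_critical_expr_eq {c w w' w'' w''' : ℝ} (hA : 1 - c * w ≠ 0) (hw' : w' ≠ 0)
    (hcrit : w'' = -(c * w' ^ 2) / (1 - c * w)) :
    (w * w''' / w' ^ 2) * (1 - c * w) - c ^ 2 * w * w' / (1 - c * w)
      = w * (1 - c * w) * (w' * w''' - w'' ^ 2) / w' ^ 3 := by
  subst hcrit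
  generalize 1 - c * w = A at *
  field_simp

lemma degenerate_critical_expr_pos {c w w' w'' w''' : ℝ} (hc : c ≤ 0) (hw : 0 < w)
    (hw' : 0 < w') (hgap : w'' ^ 2 < w' * w''')
    (hcrit : w'' = -(c * w' ^ 2) / (1 - c * w)) :
    0 < (w * w''' / w' ^ 2) * (1 - c * w) - c ^ 2 * w * w' / (1 - c * w) := by
  have hA : 0 < 1 - c * w := by nlinarith
  rw [degenerate_critical_expr_eq hA.ne' hw'.ne' hcrit]
  have : 0 < w' * w''' - w'' ^ 2 := sub_pos.mpr hgap
  positivity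

theorem stmt12_general (q S : ℝ) (hq : 0 < q) (hS : S ≤ 0)
    (W W' W'' W''' : ℝ → ℝ)
    (hWpos : ∀ x > (0:ℝ), 0 < W x) (hW'pos : ∀ x > (0:ℝ), 0 < W' x)
    (hcm : ∀ x > (0:ℝ), (W'' x) ^ 2 < W' x * W''' x)
    (b₀ : ℝ) (hb₀ : 0 < b₀)
    (hcrit : W'' b₀ = -(S * q * (W' b₀) ^ 2) / (1 - S * q * W b₀)) :
    0 < (W b₀ * W''' b₀ / (W' b₀) ^ 2) * (1 - S * q * W b₀)
        - S ^ 2 * q ^ 2 * W b₀ * W' b₀ / (1 - S * q * W b₀) := by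
  have hSq : S * q ≤ 0 := mul_nonpos_of_nonpos_of_nonneg hS hq.le
  simpa only [mul_pow] using
    degenerate_critical_expr_pos hSq (hWpos b₀ hb₀) (hW'pos b₀ hb₀) (hcm b₀ hb₀) hcrit

theorem stmt12 (q S : ℝ) (hq : 0 < q) (hS : S ≤ 0)
    (W W' W'' W''' : ℝ → ℝ)
    (hW1 : ∀ x > (0:ℝ), HasDerivAt W (W' x) x)
    (hW2 : ∀ x > (0:ℝ), HasDerivAt W' (W'' x) x)
    (hW3 : ∀ x > (0:ℝ), HasDerivAt W'' (W''' x) x)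
    (hW3c : ContinuousOn W''' (Set.Ioi 0))
    (hWpos : ∀ x > (0:ℝ), 0 < W x) (hW'pos : ∀ x > (0:ℝ), 0 < W' x)
    (hcm : ∀ x > (0:ℝ), (W'' x) ^ 2 < W' x * W''' x)
    (b₀ : ℝ) (hb₀ : 0 < b₀)
    (hcrit : W'' b₀ = -(S * q * (W' b₀) ^ 2) / (1 - S * q * W b₀)) :
    0 < (W b₀ * W''' b₀ / (W' b₀) ^ 2) * (1 - S * q * W b₀)
        - S ^ 2 * q ^ 2 * W b₀ * W' b₀ / (1 - S * q * W b₀) :=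
  stmt12_general q S hq hS W W' W'' W''' hWpos hW'pos hcm b₀ hb₀ hcrit
end

section
/- The function f̄ is differentiable with f̄'(a) = (1 − φc·Z(a)) · ( W(a)·W''(a) − (W'(a))² ) / W(a)² for all a > 0, and f̄'(a) > 0 for all a > 0. -/
open MeasureTheory Set Filter

/-- `f̄(a) = ((1 − φc·Z(a))/Z'(a))·Z''(a) + φc·Z'(a)`, where `Z'(a) = q·W(a)` and
`Z''(a) = q·W'(a)`. -/
noncomputable def fbar (q φc : ℝ) (W W' : ℝ → ℝ) (a : ℝ) : ℝ :=
  ((1 - φc * Zfun q W a) / (q * W a)) * (q * W' a) + φc * (q * W a)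

/-! `W` is increasing and positive, hence bounded on `(0, a]`, which makes it integrable near `0`
where nothing else is assumed. So `Z` is differentiable with `Z' = q W` and `Z > 1`, the quotient
rule gives `f̄'`, and `f̄'` is the product of `1 - φc Z(a) < 0` and `W W'' - W'^2 < 0` over
`W^2 > 0`. -/

theorem intervalIntegrable_of_monotoneOn_Ioc {W : ℝ → ℝ} {b a c : ℝ} (hba : b ≤ a)
    (hmono : MonotoneOn W (Ioc b a)) (hle : ∀ x ∈ Ioc b a, c ≤ W x) :
    IntervalIntegrable W volume b a := by
  set g : ℝ → ℝ := fun x => if x ≤ b then c else W x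
  have hg : MonotoneOn g (uIcc b a) := by
    rw [uIcc_of_le hba]
    intro x hx y hy hxy
    by_cases hxb : x ≤ b
    · by_cases hyb : y ≤ b
      · simp [g, hxb, hyb]
      · simpa [g, hxb, hyb] using hle y ⟨not_le.mp hyb, hy.2⟩
    · have hyb : ¬ y ≤ b := fun h => hxb (hxy.trans h)
      simpa [g, hxb, hyb] using hmono ⟨not_le.mp hxb, hx.2⟩ ⟨not_le.mp hyb, hy.2⟩ hxy
  rw [intervalIntegrable_iff_integrableOn_Ioc_of_le hba]
  refine ((intervalIntegrable_iff_integrableOn_Ioc_of_le hba).mp hg.intervalIntegrable).congr_fun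
    (fun x hx => ?_) measurableSet_Ioc
  simp [g, not_le.mpr hx.1]

theorem Zfun_hasDerivAt {q a : ℝ} {W : ℝ → ℝ} (hint : IntervalIntegrable W volume 0 a)
    (hmeas : StronglyMeasurableAtFilter W (nhds a)) (hcont : ContinuousAt W a) :
    HasDerivAt (Zfun q W) (q * W a) a :=
  ((intervalIntegral.integral_hasDerivAt_right hint hmeas hcont).const_mul q).const_add 1

theorem one_lt_Zfun {q a : ℝ} {W : ℝ → ℝ} (hq : 0 < q) (ha : 0 < a)
    (hint : IntervalIntegrable W volume 0 a) (hpos : ∀ x ∈ Ioo 0 a, 0 < W x) :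
    1 < Zfun q W a := by
  have := mul_pos hq (intervalIntegral.intervalIntegral_pos_of_pos_on hint hpos ha)
  unfold Zfun
  linarith

theorem fbar_hasDerivAt {q φc a : ℝ} {W W' W'' : ℝ → ℝ} (hq : q ≠ 0) (hWa : W a ≠ 0)
    (hZ : HasDerivAt (Zfun q W) (q * W a) a) (hW : HasDerivAt W (W' a) a)
    (hW' : HasDerivAt W' (W'' a) a) :
    HasDerivAt (fbar q φc W W')
      ((1 - φc * Zfun q W a) * (W a * W'' a - W' a ^ 2) / W a ^ 2) a := by
  have hnum := (hZ.const_mul φc).const_sub 1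
  have hden := hW.const_mul q
  have hfbar := ((hnum.div hden (mul_ne_zero hq hWa)).mul (hW'.const_mul q)).add
    (hden.const_mul φc)
  refine hfbar.congr_deriv ?_
  simp only [Pi.div_apply]
  field_simp
  ring

theorem stmt13_general (q φc : ℝ) (hq : 0 < q) (hφc : 1 < φc)
    (W W' W'' : ℝ → ℝ)
    (hW1 : ∀ x > (0:ℝ), HasDerivAt W (W' x) x)
    (hW2 : ∀ x > (0:ℝ), HasDerivAt W' (W'' x) x)
    (hWpos : ∀ x > (0:ℝ), 0 < W x) (hW'pos : ∀ x > (0:ℝ), 0 < W' x)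
    (hconc : ∀ x > (0:ℝ), W x * W'' x < (W' x) ^ 2) :
    ∀ a > (0:ℝ),
      HasDerivAt (fbar q φc W W')
        ((1 - φc * Zfun q W a) * (W a * W'' a - (W' a) ^ 2) / (W a) ^ 2) a
      ∧ 0 < (1 - φc * Zfun q W a) * (W a * W'' a - (W' a) ^ 2) / (W a) ^ 2 := by
  intro a ha
  have hWc : ContinuousOn W (Ioi 0) := fun x hx => (hW1 x hx).continuousAt.continuousWithinAt
  have hmono : MonotoneOn W (Ioi 0) :=
    (strictMonoOn_of_hasDerivWithinAt_pos (convex_Ioi 0) hWc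
      (fun x hx => (hW1 x (interior_subset hx)).hasDerivWithinAt)
      (fun x hx => hW'pos x (interior_subset hx))).monotoneOn
  have hint : IntervalIntegrable W volume 0 a :=
    intervalIntegrable_of_monotoneOn_Ioc ha.le (hmono.mono Ioc_subset_Ioi_self)
      (fun x hx => (hWpos x hx.1).le)
  have hZ : HasDerivAt (Zfun q W) (q * W a) a :=
    Zfun_hasDerivAt hint (hWc.stronglyMeasurableAtFilter isOpen_Ioi a ha) (hW1 a ha).continuousAt
  have hZa : 1 < Zfun q W a := one_lt_Zfun hq ha hint fun x hx => hWpos x hx.1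
  refine ⟨fbar_hasDerivAt hq.ne' (hWpos a ha).ne' hZ (hW1 a ha) (hW2 a ha), ?_⟩
  have hfactor : 1 - φc * Zfun q W a < 0 := by nlinarith
  have hconcave : W a * W'' a - W' a ^ 2 < 0 := sub_neg.mpr (hconc a ha)
  exact div_pos (mul_pos_of_neg_of_neg hfactor hconcave) (pow_pos (hWpos a ha) 2)

theorem stmt13 (q φc : ℝ) (hq : 0 < q) (hφc : 1 < φc)
    (W W' W'' : ℝ → ℝ)
    (hW1 : ∀ x > (0:ℝ), HasDerivAt W (W' x) x)
    (hW2 : ∀ x > (0:ℝ), HasDerivAt W' (W'' x) x)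
    (hW2c : ContinuousOn W'' (Set.Ioi 0))
    (hWpos : ∀ x > (0:ℝ), 0 < W x) (hW'pos : ∀ x > (0:ℝ), 0 < W' x)
    (hconc : ∀ x > (0:ℝ), W x * W'' x < (W' x) ^ 2) :
    ∀ a > (0:ℝ),
      HasDerivAt (fbar q φc W W')
        ((1 - φc * Zfun q W a) * (W a * W'' a - (W' a) ^ 2) / (W a) ^ 2) a
      ∧ 0 < (1 - φc * Zfun q W a) * (W a * W'' a - (W' a) ^ 2) / (W a) ^ 2 :=
  stmt13_general q φc hq hφc W W' W'' hW1 hW2 hWpos hW'pos hconc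
end
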